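/- arXiv:1010.5807 — 4 statements merged into one kernel-verified Lean document; each statement's English description precedes it below -/
import Mathlib

section
/- For every measurable function g : (0,1) → ℝ with ∫₀¹ g(x)² x (log x)² dx < ∞, there exists a constant C > 0 (independent of g) such that ∫₀¹ (∫₀ˣ g(t) dt)² (1/x) dx ≤ C ∫₀¹ g(x)² x (log x)² dx. -/
/-!
For `0 < c < 1` write `L = -log`. Cauchy–Schwarz with the weight `t L(t)^(1+c)` gives
`(∫₀ˣ g)² ≤ (∫₀ˣ g² t L^(1+c)) · ∫₀ˣ dt / (t L^(1+c)) = (∫₀ˣ g² t L^(1+c)) / (c L(x)^c)`.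
Dividing by `x`, integrating over `(0,1)` and exchanging the order of integration, each `t`
picks up the factor `(1/c) ∫ₜ¹ dx / (x L^c) = L(t)^(1-c) / (c (1-c))`, which turns `t L^(1+c)`
into `t L² = t (log t)²`. Hence the inequality holds with `C = 1 / (c (1-c))`, i.e. `C = 4` for
`c = 1/2`.
-/

open MeasureTheory Set Filter Topology
open scoped ENNReal

theorem ofReal_integral_le_lintegral_ofReal {α : Type*} [MeasurableSpace α] {μ : Measure α}
    {f : α → ℝ} (hf : 0 ≤ᵐ[μ] f) :
    ENNReal.ofReal (∫ a, f a ∂μ) ≤ ∫⁻ a, ENNReal.ofReal (f a) ∂μ :=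
  calc ENNReal.ofReal (∫ a, f a ∂μ) ≤ ‖∫ a, f a ∂μ‖ₑ := by
        rw [Real.enorm_eq_ofReal_abs]; exact ENNReal.ofReal_le_ofReal (le_abs_self _)
    _ ≤ ∫⁻ a, ‖f a‖ₑ ∂μ := enorm_integral_le_lintegral_enorm _
    _ = ∫⁻ a, ENNReal.ofReal (f a) ∂μ :=
        lintegral_congr_ae (hf.mono fun a ha => Real.enorm_of_nonneg ha)

theorem enorm_integral_sq_le_lintegral_mul_lintegral_inv {α : Type*} [MeasurableSpace α]
    {μ : Measure α} {g w : α → ℝ} (hg : AEMeasurable g μ) (hw : AEMeasurable w μ)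
    (hw0 : ∀ᵐ a ∂μ, 0 < w a) :
    ‖∫ a, g a ∂μ‖ₑ ^ 2 ≤
      (∫⁻ a, ENNReal.ofReal (g a ^ 2 * w a) ∂μ) * ∫⁻ a, ENNReal.ofReal (w a)⁻¹ ∂μ := by
  have sq_ofReal_sqrt : ∀ y : ℝ, 0 ≤ y → ENNReal.ofReal √y ^ (2 : ℝ) = ENNReal.ofReal y :=
    fun y hy => by rw [ENNReal.ofReal_rpow_of_nonneg (by positivity) zero_le_two,
      Real.rpow_two, Real.sq_sqrt hy]
  have hsplit : ∀ᵐ a ∂μ, ‖g a‖ₑ =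
      ENNReal.ofReal √(g a ^ 2 * w a) * ENNReal.ofReal √(w a)⁻¹ := by
    filter_upwards [hw0] with a ha
    rw [← ENNReal.ofReal_mul (Real.sqrt_nonneg _), ← Real.sqrt_mul (by positivity),
      mul_assoc, mul_inv_cancel₀ ha.ne', mul_one, Real.sqrt_sq_eq_abs, Real.enorm_eq_ofReal_abs]
  have holder := ENNReal.lintegral_mul_le_Lp_mul_Lq μ Real.HolderConjugate.two_two
    ((hg.pow_const 2).mul hw).sqrt.ennreal_ofReal hw.inv.sqrt.ennreal_ofReal
  calc ‖∫ a, g a ∂μ‖ₑ ^ 2 ≤ (∫⁻ a, ‖g a‖ₑ ∂μ) ^ 2 :=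
        pow_le_pow_left' (enorm_integral_le_lintegral_enorm _) 2
    _ ≤ _ := by
        rw [lintegral_congr_ae hsplit]
        refine (pow_le_pow_left' holder 2).trans_eq ?_
        rw [mul_pow, ← ENNReal.rpow_natCast, ← ENNReal.rpow_natCast, ← ENNReal.rpow_mul,
          ← ENNReal.rpow_mul, show 1 / (2 : ℝ) * ((2 : ℕ) : ℝ) = 1 by norm_num, ENNReal.rpow_one,
          ENNReal.rpow_one]
        congr 1 <;> refine lintegral_congr_ae (hw0.mono fun a ha => sq_ofReal_sqrt _ ?_) <;>
          simp only [Pi.mul_apply, Pi.inv_apply] <;> positivity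

theorem lintegral_Ioo_ofReal_deriv_eq_of_tendsto {f f' : ℝ → ℝ} {a b fa fb : ℝ} (hab : a < b)
    (hderiv : ∀ x ∈ Ioo a b, HasDerivAt f (f' x) x) (hpos : ∀ x ∈ Ioo a b, 0 ≤ f' x)
    (ha : Tendsto f (𝓝[>] a) (𝓝 fa)) (hb : Tendsto f (𝓝[<] b) (𝓝 fb)) :
    ∫⁻ x in Ioo a b, ENNReal.ofReal (f' x) = ENNReal.ofReal (fb - fa) := by
  classical
  -- `F` extends `f` continuously to `[a, b]`, where a nonnegative derivative is integrable
  set F : ℝ → ℝ := Function.update (Function.update f a fa) b fb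
  have hF : ∀ x ∈ Ioo a b, HasDerivAt F (f' x) x := fun x hx =>
    (hderiv x hx).congr_of_eventuallyEq <| by
      filter_upwards [Ioo_mem_nhds hx.1 hx.2] with y hy
      unfold F
      rw [Function.update_of_ne hy.2.ne, Function.update_of_ne hy.1.ne']
  have hcont : ContinuousOn F (Icc a b) := by
    rw [continuousOn_update_iff, continuousOn_update_iff, Icc_sdiff_right, Ico_sdiff_left]
    refine ⟨⟨fun x hx => (hderiv x hx).continuousAt.continuousWithinAt,
      fun _ => ha.mono_left (nhdsWithin_mono _ Ioo_subset_Ioi_self)⟩, fun _ => ?_⟩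
    refine (hb.congr' ?_).mono_left (nhdsWithin_mono _ Ico_subset_Iio_self)
    filter_upwards [Ioo_mem_nhdsLT hab] with x hx
    exact (Function.update_of_ne hx.1.ne' _ _).symm
  have hint := intervalIntegral.integrableOn_deriv_of_nonneg hcont hF hpos
  rw [← ofReal_integral_eq_lintegral_ofReal (hint.mono_set Ioo_subset_Ioc_self)
      ((ae_restrict_iff' measurableSet_Ioo).2 (Eventually.of_forall hpos)),
    ← integral_Ioc_eq_integral_Ioo, ← intervalIntegral.integral_of_le hab.le,
    intervalIntegral.integral_eq_sub_of_hasDerivAt_of_tendsto hab hderiv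
      ((intervalIntegrable_iff_integrableOn_Ioc_of_le hab.le).2 hint) ha hb]

theorem hasDerivAt_neg_log_rpow {x : ℝ} (hx : Real.log x ≠ 0) (p : ℝ) :
    HasDerivAt (fun s => (-Real.log s) ^ p) (-x⁻¹ * p * (-Real.log x) ^ (p - 1)) x :=
  (Real.hasDerivAt_log fun h => hx (h ▸ Real.log_zero)).neg.rpow_const
    (Or.inl (neg_ne_zero.2 hx))

theorem lintegral_Ioo_zero_inv_mul_neg_log_rpow {c x : ℝ} (hc : 0 < c) (hx0 : 0 < x)
    (hx1 : x < 1) :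
    ∫⁻ t in Ioo 0 x, ENNReal.ofReal (t * (-Real.log t) ^ (c + 1))⁻¹ =
      ENNReal.ofReal (c * (-Real.log x) ^ c)⁻¹ := by
  have hlog : ∀ t ∈ Ioo 0 x, 0 < -Real.log t := fun t ht =>
    neg_pos.2 (Real.log_neg ht.1 (ht.2.trans hx1))
  have hlim : Tendsto (fun s => (-Real.log s) ^ (-c) / c) (𝓝[>] 0) (𝓝 0) := by
    simpa using ((tendsto_rpow_neg_atTop hc).comp
      (tendsto_neg_atBot_atTop.comp Real.tendsto_log_nhdsGT_zero)).div_const c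
  rw [mul_inv, ← Real.rpow_neg (neg_pos.2 (Real.log_neg hx0 hx1)).le, inv_mul_eq_div,
    ← sub_zero ((-Real.log x) ^ (-c) / c)]
  refine lintegral_Ioo_ofReal_deriv_eq_of_tendsto hx0 (fun t ht => ?_)
    (fun t ht => inv_nonneg.2 (mul_nonneg ht.1.le (Real.rpow_nonneg (hlog t ht).le _))) hlim ?_
  · refine ((hasDerivAt_neg_log_rpow (neg_ne_zero.1 (hlog t ht).ne') (-c)).div_const c
      ).congr_deriv ?_
    rw [show -c - 1 = -(c + 1) by ring, Real.rpow_neg (hlog t ht).le]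
    field_simp
  · exact (hasDerivAt_neg_log_rpow (Real.log_neg hx0 hx1).ne (-c) |>.div_const c).continuousAt
      |>.tendsto.mono_left nhdsWithin_le_nhds

theorem lintegral_Ioo_one_inv_mul_neg_log_rpow {c t : ℝ} (hc : c < 1) (ht0 : 0 < t)
    (ht1 : t < 1) :
    ∫⁻ x in Ioo t 1, ENNReal.ofReal (x * (-Real.log x) ^ c)⁻¹ =
      ENNReal.ofReal ((-Real.log t) ^ (1 - c) / (1 - c)) := by
  have hc' : 0 < 1 - c := sub_pos.2 hc
  have hlog : ∀ x ∈ Ioo t 1, 0 < -Real.log x := fun x hx =>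
    neg_pos.2 (Real.log_neg (ht0.trans hx.1) hx.2)
  have hderiv : ∀ x, Real.log x ≠ 0 →
      HasDerivAt (fun s => -((-Real.log s) ^ (1 - c) / (1 - c)))
        (-(-x⁻¹ * (1 - c) * (-Real.log x) ^ (1 - c - 1) / (1 - c))) x := fun x hx =>
    ((hasDerivAt_neg_log_rpow hx (1 - c)).div_const (1 - c)).neg
  have hlim : Tendsto (fun s => -((-Real.log s) ^ (1 - c) / (1 - c))) (𝓝[<] 1) (𝓝 0) := by
    have hcont : ContinuousAt (fun s => -((-Real.log s) ^ (1 - c) / (1 - c))) 1 :=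
      (((Real.continuousAt_log one_ne_zero).neg.rpow_const (Or.inr hc'.le)).div_const _).neg
    simpa [Real.zero_rpow hc'.ne'] using hcont.tendsto.mono_left nhdsWithin_le_nhds
  rw [show (-Real.log t) ^ (1 - c) / (1 - c) = 0 - -((-Real.log t) ^ (1 - c) / (1 - c)) by ring]
  refine lintegral_Ioo_ofReal_deriv_eq_of_tendsto ht1 (fun x hx => ?_)
    (fun x hx => inv_nonneg.2 <|
      mul_nonneg (ht0.trans hx.1).le (Real.rpow_nonneg (hlog x hx).le _))
    ((hderiv t (Real.log_neg ht0 ht1).ne).continuousAt.tendsto.mono_left nhdsWithin_le_nhds) hlim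
  refine (hderiv x (neg_ne_zero.1 (hlog x hx).ne')).congr_deriv ?_
  rw [show 1 - c - 1 = -c by ring, Real.rpow_neg (hlog x hx).le]
  field_simp

theorem lintegral_Ioo_lintegral_Ioo_swap {μ : Measure ℝ} [SFinite μ] {ψ k : ℝ → ℝ≥0∞}
    (hψ : Measurable ψ) (hk : Measurable k) (a b : ℝ) :
    ∫⁻ x in Ioo a b, (∫⁻ t in Ioo a x, ψ t ∂μ) * k x ∂μ =
      ∫⁻ t in Ioo a b, ψ t * ∫⁻ x in Ioo t b, k x ∂μ ∂μ := by
  set F : ℝ → ℝ → ℝ≥0∞ := fun x t =>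
    {p : ℝ × ℝ | p.2 < p.1}.indicator (fun p => ψ p.2 * k p.1) (x, t)
  have hF : Measurable (Function.uncurry F) :=
    ((hψ.comp measurable_snd).mul (hk.comp measurable_fst)).indicator
      (measurableSet_lt measurable_snd measurable_fst)
  calc ∫⁻ x in Ioo a b, (∫⁻ t in Ioo a x, ψ t ∂μ) * k x ∂μ
      = ∫⁻ x in Ioo a b, ∫⁻ t in Ioo a b, F x t ∂μ ∂μ := by
        refine setLIntegral_congr_fun measurableSet_Ioo fun x hx => ?_
        have : ∀ t, F x t = (Iio x).indicator (fun t => ψ t * k x) t := fun t => rfl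
        simp_rw [this]
        rw [lintegral_indicator measurableSet_Iio, Measure.restrict_restrict measurableSet_Iio,
          Iio_inter_Ioo, min_eq_left hx.2.le, lintegral_mul_const _ hψ]
    _ = ∫⁻ t in Ioo a b, ∫⁻ x in Ioo a b, F x t ∂μ ∂μ :=
        lintegral_lintegral_swap hF.aemeasurable
    _ = ∫⁻ t in Ioo a b, ψ t * ∫⁻ x in Ioo t b, k x ∂μ ∂μ := by
        refine setLIntegral_congr_fun measurableSet_Ioo fun t ht => ?_
        have : ∀ x, F x t = (Ioi t).indicator (fun x => ψ t * k x) x := fun x => rfl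
        simp_rw [this]
        rw [lintegral_indicator measurableSet_Ioi, Measure.restrict_restrict measurableSet_Ioi,
          Ioi_inter_Ioo, max_eq_left ht.1.le, lintegral_const_mul _ hk]

theorem ofReal_sq_setIntegral_Ioo_zero_mul_inv_le {g : ℝ → ℝ} (hg : Measurable g) {c x : ℝ}
    (hc : 0 < c) (hx0 : 0 < x) (hx1 : x < 1) :
    ENNReal.ofReal ((∫ t in Ioo 0 x, g t) ^ 2 * (1 / x)) ≤
      (∫⁻ t in Ioo 0 x, ENNReal.ofReal (g t ^ 2 * (t * (-Real.log t) ^ (c + 1)))) *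
        (ENNReal.ofReal c⁻¹ * ENNReal.ofReal (x * (-Real.log x) ^ c)⁻¹) := by
  have hlog : 0 < -Real.log x := neg_pos.2 (Real.log_neg hx0 hx1)
  have hsplit : ENNReal.ofReal c⁻¹ * ENNReal.ofReal (x * (-Real.log x) ^ c)⁻¹ =
      ENNReal.ofReal (c * (-Real.log x) ^ c)⁻¹ * ENNReal.ofReal x⁻¹ := by
    rw [← ENNReal.ofReal_mul (by positivity), ← ENNReal.ofReal_mul (by positivity), mul_inv,
      mul_inv, mul_right_comm, mul_assoc]
  rw [hsplit, one_div, ENNReal.ofReal_mul (sq_nonneg _), ← mul_assoc,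
    ← lintegral_Ioo_zero_inv_mul_neg_log_rpow hc hx0 hx1, ← sq_abs,
    ENNReal.ofReal_pow (abs_nonneg _), ← Real.enorm_eq_ofReal_abs]
  gcongr
  refine enorm_integral_sq_le_lintegral_mul_lintegral_inv hg.aemeasurable (by fun_prop)
    ((ae_restrict_iff' measurableSet_Ioo).2 (Eventually.of_forall fun t ht => ?_))
  have hlogt : 0 < -Real.log t := neg_pos.2 (Real.log_neg ht.1 (ht.2.trans hx1))
  have ht0 := ht.1
  positivity

theorem hardy_log_weight_le {c : ℝ} (hc0 : 0 < c) (hc1 : c < 1) {g : ℝ → ℝ}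
    (hg : Measurable g) (hW : IntegrableOn (fun x => g x ^ 2 * x * Real.log x ^ 2) (Ioo 0 1)) :
    ∫ x in Ioo (0:ℝ) 1, (∫ t in Ioo 0 x, g t) ^ 2 * (1 / x) ≤
      (c * (1 - c))⁻¹ * ∫ x in Ioo (0:ℝ) 1, g x ^ 2 * x * Real.log x ^ 2 := by
  set ψ : ℝ → ℝ≥0∞ := fun t => ENNReal.ofReal (g t ^ 2 * (t * (-Real.log t) ^ (c + 1)))
  set k : ℝ → ℝ≥0∞ := fun x => ENNReal.ofReal c⁻¹ * ENNReal.ofReal (x * (-Real.log x) ^ c)⁻¹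
  have hψ : Measurable ψ := by fun_prop
  have hk : Measurable k := by fun_prop
  have hC : 0 ≤ (c * (1 - c))⁻¹ := inv_nonneg.2 (mul_pos hc0 (sub_pos.2 hc1)).le
  have hW_nonneg : ∀ x ∈ Ioo (0:ℝ) 1, 0 ≤ g x ^ 2 * x * Real.log x ^ 2 := fun x hx => by
    have hx0 := hx.1
    positivity
  have hinner : ∀ t ∈ Ioo (0:ℝ) 1, ψ t * ∫⁻ x in Ioo t 1, k x =
      ENNReal.ofReal ((c * (1 - c))⁻¹ * (g t ^ 2 * t * Real.log t ^ 2)) := by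
    intro t ht
    have hlog : 0 < -Real.log t := neg_pos.2 (Real.log_neg ht.1 ht.2)
    have hsq : (-Real.log t) ^ (c + 1) * (-Real.log t) ^ (1 - c) = Real.log t ^ 2 := by
      rw [← Real.rpow_add hlog, show c + 1 + (1 - c) = 2 by ring, Real.rpow_two, neg_sq]
    have ht0 := ht.1
    have hc1' := sub_pos.2 hc1
    rw [lintegral_const_mul' _ _ ENNReal.ofReal_ne_top,
      lintegral_Ioo_one_inv_mul_neg_log_rpow hc1 ht.1 ht.2, ← ENNReal.ofReal_mul (by positivity),
      ← ENNReal.ofReal_mul (by positivity), ← hsq]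
    congr 1
    field_simp
  rw [← ENNReal.ofReal_le_ofReal_iff
    (mul_nonneg hC (setIntegral_nonneg measurableSet_Ioo hW_nonneg))]
  calc ENNReal.ofReal (∫ x in Ioo (0:ℝ) 1, (∫ t in Ioo 0 x, g t) ^ 2 * (1 / x))
      ≤ ∫⁻ x in Ioo (0:ℝ) 1, ENNReal.ofReal ((∫ t in Ioo 0 x, g t) ^ 2 * (1 / x)) :=
        ofReal_integral_le_lintegral_ofReal <| (ae_restrict_iff' measurableSet_Ioo).2 <|
          Eventually.of_forall fun x hx => mul_nonneg (sq_nonneg _) (one_div_nonneg.2 hx.1.le)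
    _ ≤ ∫⁻ x in Ioo (0:ℝ) 1, (∫⁻ t in Ioo 0 x, ψ t) * k x :=
        setLIntegral_mono' measurableSet_Ioo fun x hx =>
          ofReal_sq_setIntegral_Ioo_zero_mul_inv_le hg hc0 hx.1 hx.2
    _ = ∫⁻ t in Ioo (0:ℝ) 1, ψ t * ∫⁻ x in Ioo t 1, k x :=
        lintegral_Ioo_lintegral_Ioo_swap hψ hk 0 1
    _ = ∫⁻ t in Ioo (0:ℝ) 1,
          ENNReal.ofReal ((c * (1 - c))⁻¹ * (g t ^ 2 * t * Real.log t ^ 2)) :=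
        setLIntegral_congr_fun measurableSet_Ioo hinner
    _ = ENNReal.ofReal
          ((c * (1 - c))⁻¹ * ∫ x in Ioo (0:ℝ) 1, g x ^ 2 * x * Real.log x ^ 2) := by
        rw [← integral_const_mul, ofReal_integral_eq_lintegral_ofReal (hW.const_mul _)]
        exact (ae_restrict_iff' measurableSet_Ioo).2 <| Eventually.of_forall fun x hx =>
          mul_nonneg hC (hW_nonneg x hx)

/-- Hardy-type inequality with logarithmic weight: there is a constant `C > 0` such that
for every measurable `g : (0,1) → ℝ` with `∫₀¹ g² x (log x)² dx < ∞`,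
`∫₀¹ (∫₀ˣ g)² (1/x) dx ≤ C ∫₀¹ g² x (log x)² dx`. -/
theorem hardy_log_weight :
    ∃ C > (0 : ℝ), ∀ g : ℝ → ℝ, Measurable g →
      IntegrableOn (fun x => (g x) ^ 2 * x * (Real.log x) ^ 2) (Ioo 0 1) →
      ∫ x in Ioo (0:ℝ) 1, (∫ t in Ioo 0 x, g t) ^ 2 * (1 / x)
        ≤ C * ∫ x in Ioo (0:ℝ) 1, (g x) ^ 2 * x * (Real.log x) ^ 2 := by
  refine ⟨4, by norm_num, fun g hg hW => ?_⟩
  have h := hardy_log_weight_le (c := 1 / 2) (by norm_num) (by norm_num) hg hW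
  norm_num at h ⊢
  exact h
end

section
/- Let N ≥ 2, b > 2, B = B(0,√b), ρ(m) = b − |m|², and μ(m) = ρ(m)^{2−b/2}. There exists C > 0 such that for every C¹ function φ : B → ℝ with ∫_B (φ² + |∇φ|²) μ dm < ∞, one has ∫_B (|φ(m)| + |∇φ(m)|) dm ≤ C (∫_B (φ(m)² + |∇φ(m)|²) μ(m) dm)^{1/2}. -/
/-!
Pointwise `|φ| + |∇φ| ≤ √2 (φ² + |∇φ|²)^{1/2} = √2 ((φ² + |∇φ|²) μ)^{1/2} μ^{-1/2}`, so by
Cauchy–Schwarz `∫_B (|φ| + |∇φ|) ≤ √2 (∫_B (φ² + |∇φ|²) μ)^{1/2} (∫_B μ⁻¹)^{1/2}`. The weight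
`μ⁻¹ = ρ^{b/2-2}` is integrable on `B` because `b/2 - 2 > -1`: in polar coordinates this is the
integrability of `r^{N-1} (b - r²)^{b/2-2}` on `(0, √b)`, whose only singularity is
`(√b - r)^{b/2-2}` at the endpoint.
-/

open MeasureTheory Set Metric

lemma integrableOn_Ioo_rpow_sub_left {r β : ℝ} (hr : 0 ≤ r) (hβ : -1 < β) :
    IntegrableOn (fun y => (r - y) ^ β) (Ioo 0 r) := by
  have h := (intervalIntegral.intervalIntegrable_rpow' (a := 0) (b := r) hβ).comp_sub_left r
  rw [sub_zero, sub_self] at h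
  exact (intervalIntegrable_iff_integrableOn_Ioo_of_le hr).mp h.symm

lemma integrableOn_Ioo_pow_mul_rpow_sq_sub_sq (n : ℕ) {r β : ℝ} (hr : 0 < r) (hβ : -1 < β) :
    IntegrableOn (fun y => y ^ n * (r ^ 2 - y ^ 2) ^ β) (Ioo 0 r) := by
  have hcont : ContinuousOn (fun y => y ^ n * (r + y) ^ β) (Icc 0 r) := by
    refine ContinuousOn.mul (by fun_prop) (ContinuousOn.rpow_const (by fun_prop) ?_)
    exact fun y hy => Or.inl (by linarith [hy.1])
  refine ((integrableOn_Ioo_rpow_sub_left hr.le hβ).continuousOn_mul_of_subset hcont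
    isCompact_Icc measurableSet_Ioo Ioo_subset_Icc_self).congr_fun (fun y hy => ?_) measurableSet_Ioo
  dsimp only
  rw [show r ^ 2 - y ^ 2 = (r + y) * (r - y) by ring,
    Real.mul_rpow (by linarith [hy.1]) (by linarith [hy.2]), mul_assoc]

lemma sub_norm_sq_pos_of_mem_ball_sqrt {E : Type*} [SeminormedAddCommGroup E] {b : ℝ} {x : E}
    (hx : x ∈ ball 0 √b) : 0 < b - ‖x‖ ^ 2 := by
  have hb : 0 < √b := pos_of_mem_ball hx
  have := Real.sq_sqrt (Real.sqrt_pos.mp hb).le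
  nlinarith [mem_ball_zero_iff.mp hx, norm_nonneg x]

section HaarBall

variable {E : Type*} [NormedAddCommGroup E] [NormedSpace ℝ E] [FiniteDimensional ℝ E]
  [MeasurableSpace E] [BorelSpace E] (μ : Measure E) [μ.IsAddHaarMeasure]

lemma integrableOn_ball_rpow_sq_sub_norm_sq {r β : ℝ} (hβ : -1 < β) :
    IntegrableOn (fun x => (r ^ 2 - ‖x‖ ^ 2) ^ β) (ball 0 r) μ := by
  rcases le_or_gt r 0 with hr | hr
  · simp [ball_eq_empty.mpr hr]
  cases subsingleton_or_nontrivial E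
  · have hconst : ∀ x : E, (r ^ 2 - ‖x‖ ^ 2) ^ β = (r ^ 2) ^ β := fun x => by
      simp [Subsingleton.elim x 0]
    simp only [hconst]
    exact integrableOn_const measure_ball_lt_top.ne
  · rw [integrableOn_fun_norm_addHaar μ (f := fun y => (r ^ 2 - y ^ 2) ^ β)]
    exact integrableOn_Ioo_pow_mul_rpow_sq_sub_sq _ hr hβ

lemma integrableOn_ball_sqrt_inv_rpow_sub_norm_sq {b β : ℝ} (hb : 0 ≤ b) (hβ : β < 1) :
    IntegrableOn (fun x => ((b - ‖x‖ ^ 2) ^ β)⁻¹) (ball 0 √b) μ := by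
  refine (integrableOn_ball_rpow_sq_sub_norm_sq μ (r := √b) (neg_lt_neg hβ)).congr_fun
    (fun x hx => ?_) measurableSet_ball
  rw [← Real.rpow_neg (sub_norm_sq_pos_of_mem_ball_sqrt hx).le, Real.sq_sqrt hb]

end HaarBall

section WeightedCauchySchwarz

variable {α : Type*} [MeasurableSpace α] {ν : Measure α} {g w : α → ℝ}

lemma memLp_two_sqrt_of_integrable (hg : Integrable g ν) (hg0 : 0 ≤ᵐ[ν] g) :
    MemLp (fun x => √(g x)) 2 ν := by
  refine (memLp_two_iff_integrable_sq
    (Real.continuous_sqrt.comp_aestronglyMeasurable hg.aestronglyMeasurable)).mpr ?_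
  refine hg.congr ?_
  filter_upwards [hg0] with x hx
  rw [Real.sq_sqrt hx]

lemma integral_sqrt_rpow_two (hg0 : 0 ≤ᵐ[ν] g) : ∫ x, √(g x) ^ (2 : ℝ) ∂ν = ∫ x, g x ∂ν := by
  refine integral_congr_ae ?_
  filter_upwards [hg0] with x hx
  rw [Real.rpow_two, Real.sq_sqrt hx]

lemma sqrt_eq_sqrt_mul_mul_sqrt_inv {a c : ℝ} (ha : 0 ≤ a) (hc : 0 < c) :
    √a = √(a * c) * √c⁻¹ := by
  rw [← Real.sqrt_mul (mul_nonneg ha hc.le), mul_assoc, mul_inv_cancel₀ hc.ne', mul_one]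

lemma integrable_sqrt_and_integral_sqrt_le_of_weight (hg : 0 ≤ᵐ[ν] g) (hw : ∀ᵐ x ∂ν, 0 < w x)
    (hgw : Integrable (fun x => g x * w x) ν) (hw_inv : Integrable (fun x => (w x)⁻¹) ν) :
    Integrable (fun x => √(g x)) ν ∧
      ∫ x, √(g x) ∂ν ≤ (∫ x, g x * w x ∂ν) ^ (1 / 2 : ℝ) * (∫ x, (w x)⁻¹ ∂ν) ^ (1 / 2 : ℝ) := by
  have hgw0 : 0 ≤ᵐ[ν] fun x => g x * w x := by
    filter_upwards [hg, hw] with x hx hwx using mul_nonneg hx hwx.le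
  have hw_inv0 : 0 ≤ᵐ[ν] fun x => (w x)⁻¹ := by
    filter_upwards [hw] with x hwx using inv_nonneg.mpr hwx.le
  have hsplit : (fun x => √(g x)) =ᵐ[ν] fun x => √(g x * w x) * √(w x)⁻¹ := by
    filter_upwards [hg, hw] with x hx hwx
    exact sqrt_eq_sqrt_mul_mul_sqrt_inv hx hwx
  have hF := memLp_two_sqrt_of_integrable hgw hgw0
  have hG := memLp_two_sqrt_of_integrable hw_inv hw_inv0
  refine ⟨(hF.integrable_mul hG).congr hsplit.symm, ?_⟩
  have hholder := integral_mul_le_Lp_mul_Lq_of_nonneg Real.HolderConjugate.two_two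
    (f := fun x => √(g x * w x)) (g := fun x => √(w x)⁻¹)
    (.of_forall fun x => Real.sqrt_nonneg _) (.of_forall fun x => Real.sqrt_nonneg _)
    (by rwa [ENNReal.ofReal_ofNat]) (by rwa [ENNReal.ofReal_ofNat])
  rwa [integral_sqrt_rpow_two hgw0, integral_sqrt_rpow_two hw_inv0, ← integral_congr_ae hsplit]
    at hholder

end WeightedCauchySchwarz

lemma abs_add_abs_le_sqrt_two_mul_sqrt_sq_add_sq (a c : ℝ) :
    |a| + |c| ≤ √2 * √(a ^ 2 + c ^ 2) := by
  rw [← Real.sqrt_mul zero_le_two]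
  refine Real.le_sqrt_of_sq_le ?_
  nlinarith [sq_abs a, sq_abs c, sq_nonneg (|a| - |c|)]

theorem H1mu_embeds_W11_general (N : ℕ) (b : ℝ) (hb : 2 < b)
    (B : Set (EuclideanSpace ℝ (Fin N)))
    (hB : B = Metric.ball (0 : EuclideanSpace ℝ (Fin N)) (Real.sqrt b))
    (μ : EuclideanSpace ℝ (Fin N) → ℝ)
    (hμ : ∀ m, μ m = (b - ‖m‖ ^ 2) ^ (2 - b / 2 : ℝ)) :
    ∃ C > (0 : ℝ), ∀ φ : EuclideanSpace ℝ (Fin N) → ℝ,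
      ContDiffOn ℝ 1 φ B →
      IntegrableOn (fun m => ((φ m) ^ 2 + ‖fderiv ℝ φ m‖ ^ 2) * μ m) B volume →
      ∫ m in B, (|φ m| + ‖fderiv ℝ φ m‖)
        ≤ C * (∫ m in B, ((φ m) ^ 2 + ‖fderiv ℝ φ m‖ ^ 2) * μ m) ^ ((1:ℝ)/2) := by
  subst hB
  have hμ_pos : ∀ m ∈ ball (0 : EuclideanSpace ℝ (Fin N)) √b, 0 < μ m := fun m hm =>
    hμ m ▸ Real.rpow_pos_of_pos (sub_norm_sq_pos_of_mem_ball_sqrt hm) _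
  have hμ_inv : IntegrableOn (fun m => (μ m)⁻¹) (ball 0 √b) := by
    simpa only [hμ] using
      integrableOn_ball_sqrt_inv_rpow_sub_norm_sq volume (β := 2 - b / 2) (by linarith) (by linarith)
  set I := ∫ m in ball 0 √b, (μ m)⁻¹
  have hI : 0 ≤ I :=
    setIntegral_nonneg measurableSet_ball fun m hm => (inv_pos.mpr (hμ_pos m hm)).le
  refine ⟨√2 * (I + 1) ^ (1 / 2 : ℝ), by positivity, fun φ _ hφ => ?_⟩
  obtain ⟨hsqrt_int, hsqrt_le⟩ := integrable_sqrt_and_integral_sqrt_le_of_weight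
    (g := fun m => φ m ^ 2 + ‖fderiv ℝ φ m‖ ^ 2) (.of_forall fun m => by positivity)
    (ae_restrict_of_forall_mem measurableSet_ball hμ_pos) hφ hμ_inv
  have hnorm : 0 ≤ ∫ m in ball 0 √b, (φ m ^ 2 + ‖fderiv ℝ φ m‖ ^ 2) * μ m :=
    setIntegral_nonneg measurableSet_ball fun m hm => by have := hμ_pos m hm; positivity
  calc ∫ m in ball 0 √b, (|φ m| + ‖fderiv ℝ φ m‖)
      ≤ ∫ m in ball 0 √b, √2 * √(φ m ^ 2 + ‖fderiv ℝ φ m‖ ^ 2) :=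
        integral_mono_of_nonneg (.of_forall fun m => by positivity) (hsqrt_int.const_mul _)
          (.of_forall fun m => by
            simpa only [abs_norm] using
              abs_add_abs_le_sqrt_two_mul_sqrt_sq_add_sq (φ m) ‖fderiv ℝ φ m‖)
    _ = √2 * ∫ m in ball 0 √b, √(φ m ^ 2 + ‖fderiv ℝ φ m‖ ^ 2) := integral_const_mul _ _
    _ ≤ √2 * ((∫ m in ball 0 √b, (φ m ^ 2 + ‖fderiv ℝ φ m‖ ^ 2) * μ m) ^ (1 / 2 : ℝ)
          * (I + 1) ^ (1 / 2 : ℝ)) := by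
        grw [hsqrt_le]
        gcongr
        linarith
    _ = _ := by ring

/-- For `b > 2` the weighted Sobolev space `H¹_μ(B)` with `μ = ρ^{2-b/2}` embeds into
`W^{1,1}(B)`: there is `C > 0` such that for every `C¹` function `φ` on `B` with finite
weighted norm, `∫_B (|φ| + |∇φ|) ≤ C (∫_B (φ² + |∇φ|²) μ)^{1/2}`. -/
theorem H1mu_embeds_W11 (N : ℕ) (hN : 2 ≤ N) (b : ℝ) (hb : 2 < b)
    (B : Set (EuclideanSpace ℝ (Fin N)))
    (hB : B = Metric.ball (0 : EuclideanSpace ℝ (Fin N)) (Real.sqrt b))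
    (μ : EuclideanSpace ℝ (Fin N) → ℝ)
    (hμ : ∀ m, μ m = (b - ‖m‖ ^ 2) ^ (2 - b / 2 : ℝ)) :
    ∃ C > (0 : ℝ), ∀ φ : EuclideanSpace ℝ (Fin N) → ℝ,
      ContDiffOn ℝ 1 φ B →
      IntegrableOn (fun m => ((φ m) ^ 2 + ‖fderiv ℝ φ m‖ ^ 2) * μ m) B volume →
      ∫ m in B, (|φ m| + ‖fderiv ℝ φ m‖)
        ≤ C * (∫ m in B, ((φ m) ^ 2 + ‖fderiv ℝ φ m‖ ^ 2) * μ m) ^ ((1:ℝ)/2) :=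
  H1mu_embeds_W11_general N b hb B hB μ hμ
end

section
/- Let N ≥ 2, b ≥ 6, −1 < θ < 1, B = B(0,√b), ρ(m) = b − |m|². Then for every w ∈ C_c^∞(B), ∫_B ⟨m, ∇(w(m)²)⟩ ρ(m)^{θ−1} dm = − ∫_B w(m)² (N ρ(m)^{θ−1} + 2(1−θ)|m|² ρ(m)^{θ−2}) dm ≤ 0, and consequently (2 − b/2 − θ) ∫_B ⟨m, ∇w(m)⟩ w(m) ρ(m)^{θ−1} dm ≥ 0. -/
open MeasureTheory
open scoped RealInnerProductSpace

private lemma integral_fderiv_apply_eq_zero {N : ℕ}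
    {g : EuclideanSpace ℝ (Fin N) → ℝ} (hg : ContDiff ℝ (⊤ : ℕ∞) g)
    (hgc : HasCompactSupport g) (v : EuclideanSpace ℝ (Fin N)) :
    ∫ m, fderiv ℝ g m v = 0 := by
  obtain ⟨C, hC⟩ := ContDiff.lipschitzWith_of_hasCompactSupport hgc hg (by simp)
  have key := LipschitzWith.integral_lineDeriv_mul_eq (μ := volume)
    (LipschitzWith.const (b := (1:ℝ))) hC hgc v
  have h1 : ∀ x : EuclideanSpace ℝ (Fin N),
      lineDeriv ℝ (fun _ : EuclideanSpace ℝ (Fin N) => (1:ℝ)) x v = 0 := by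
    intro x; simp [lineDeriv]
  have h2 : ∀ x : EuclideanSpace ℝ (Fin N),
      lineDeriv ℝ g x (-v) = -(fderiv ℝ g x v) := by
    intro x
    rw [(hg.differentiable (by simp) x).lineDeriv_eq_fderiv, map_neg]
  simp only [h1, h2, zero_mul, mul_one, integral_zero, integral_neg] at key
  linarith

private lemma sum_coord_single {N : ℕ} (m : EuclideanSpace ℝ (Fin N)) :
    ∑ i, m i • EuclideanSpace.single i (1 : ℝ) = m := by
  simpa [EuclideanSpace.basisFun_apply, EuclideanSpace.basisFun_repr] using
    (EuclideanSpace.basisFun (Fin N) ℝ).sum_repr m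

private lemma hw2deriv {N : ℕ} {w : EuclideanSpace ℝ (Fin N) → ℝ} (hw : ContDiff ℝ (⊤ : ℕ∞) w)
    (m : EuclideanSpace ℝ (Fin N)) :
    HasFDerivAt (fun x => w x ^ 2) ((2 * w m) • fderiv ℝ w m) m := by
  have h1 := (hw.differentiable (by simp) m).hasFDerivAt
  exact (h1.mul h1).congr_fderiv (by rw [two_mul, add_smul]) |>.congr_of_eventuallyEq (Filter.Eventually.of_forall fun x => pow_two (w x))

private lemma hrpowderiv {N : ℕ} (b θ : ℝ) (m : EuclideanSpace ℝ (Fin N))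
    (hm : 0 < b - ‖m‖ ^ 2) :
    HasFDerivAt (fun x : EuclideanSpace ℝ (Fin N) => (b - ‖x‖ ^ 2) ^ (θ - 1))
      (((θ - 1) * (b - ‖m‖ ^ 2) ^ (θ - 2) * (-2)) • (innerSL ℝ m)) m := by
  have hρd : HasFDerivAt (fun x : EuclideanSpace ℝ (Fin N) => b - ‖x‖ ^ 2)
      ((-2 : ℝ) • innerSL ℝ m) m := by
    have := (hasFDerivAt_const b m).sub (hasStrictFDerivAt_norm_sq m).hasFDerivAt
    exact this.congr_fderiv (by ext v; simp)
  have hd : HasDerivAt (fun y : ℝ => y ^ (θ - 1)) ((θ - 1) * (b - ‖m‖ ^ 2) ^ (θ - 1 - 1))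
      (b - ‖m‖ ^ 2) := Real.hasDerivAt_rpow_const (Or.inl (ne_of_gt hm))
  have h2 := hd.comp_hasFDerivAt m hρd
  have h3 : (fun y : ℝ => y ^ (θ - 1)) ∘ (fun x : EuclideanSpace ℝ (Fin N) => b - ‖x‖ ^ 2)
      = fun x : EuclideanSpace ℝ (Fin N) => (b - ‖x‖ ^ 2) ^ (θ - 1) := rfl
  rw [h3] at h2
  exact h2.congr_fderiv (by rw [show θ - 1 - 1 = θ - 2 by ring, smul_smul])

private lemma hhderiv {N : ℕ} {w : EuclideanSpace ℝ (Fin N) → ℝ} (hw : ContDiff ℝ (⊤ : ℕ∞) w)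
    (b θ : ℝ) (m : EuclideanSpace ℝ (Fin N)) (hm : 0 < b - ‖m‖ ^ 2) :
    HasFDerivAt (fun x => w x ^ 2 * (b - ‖x‖ ^ 2) ^ (θ - 1))
      ((w m ^ 2 * ((θ - 1) * (b - ‖m‖ ^ 2) ^ (θ - 2) * (-2))) • innerSL ℝ m
        + ((b - ‖m‖ ^ 2) ^ (θ - 1) * (2 * w m)) • fderiv ℝ w m) m := by
  have := (hw2deriv hw m).mul (hrpowderiv b θ m hm)
  exact this.congr_fderiv (by simp only [smul_smul])

private lemma hgideriv {N : ℕ} {w : EuclideanSpace ℝ (Fin N) → ℝ} (hw : ContDiff ℝ (⊤ : ℕ∞) w)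
    (b θ : ℝ) (m : EuclideanSpace ℝ (Fin N)) (hm : 0 < b - ‖m‖ ^ 2) (i : Fin N) :
    HasFDerivAt (fun x => w x ^ 2 * (b - ‖x‖ ^ 2) ^ (θ - 1) * x i)
      ((w m ^ 2 * (b - ‖m‖ ^ 2) ^ (θ - 1)) • EuclideanSpace.proj i
        + (m i) • ((w m ^ 2 * ((θ - 1) * (b - ‖m‖ ^ 2) ^ (θ - 2) * (-2))) • innerSL ℝ m
        + ((b - ‖m‖ ^ 2) ^ (θ - 1) * (2 * w m)) • fderiv ℝ w m)) m := by
  have hp : HasFDerivAt (fun x : EuclideanSpace ℝ (Fin N) => x i)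
      (EuclideanSpace.proj (𝕜 := ℝ) i) m := (EuclideanSpace.proj (𝕜 := ℝ) i).hasFDerivAt
  exact (hhderiv hw b θ m hm).mul hp

private lemma div_sum_eq {N : ℕ} {w : EuclideanSpace ℝ (Fin N) → ℝ} (hw : ContDiff ℝ (⊤ : ℕ∞) w)
    (b θ : ℝ) (m : EuclideanSpace ℝ (Fin N)) (hm : 0 < b - ‖m‖ ^ 2) :
    ∑ i, fderiv ℝ (fun x => w x ^ 2 * (b - ‖x‖ ^ 2) ^ (θ - 1) * x i) m
        (EuclideanSpace.single i 1)
      = fderiv ℝ (fun x => w x ^ 2) m m * (b - ‖m‖ ^ 2) ^ (θ - 1)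
        + w m ^ 2 * (N * (b - ‖m‖ ^ 2) ^ (θ - 1)
          + 2 * (1 - θ) * ‖m‖ ^ 2 * (b - ‖m‖ ^ 2) ^ (θ - 2)) := by
  set D : EuclideanSpace ℝ (Fin N) →L[ℝ] ℝ :=
    (w m ^ 2 * ((θ - 1) * (b - ‖m‖ ^ 2) ^ (θ - 2) * (-2))) • innerSL ℝ m
      + ((b - ‖m‖ ^ 2) ^ (θ - 1) * (2 * w m)) • fderiv ℝ w m with hD
  have hf : ∀ i : Fin N, fderiv ℝ (fun x => w x ^ 2 * (b - ‖x‖ ^ 2) ^ (θ - 1) * x i) m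
      = (w m ^ 2 * (b - ‖m‖ ^ 2) ^ (θ - 1)) • EuclideanSpace.proj (𝕜 := ℝ) i + (m i) • D :=
    fun i => (hgideriv hw b θ m hm i).fderiv
  simp only [hf]
  have happ : ∀ i : Fin N,
      ((w m ^ 2 * (b - ‖m‖ ^ 2) ^ (θ - 1)) • EuclideanSpace.proj (𝕜 := ℝ) i + (m i) • D)
        (EuclideanSpace.single i 1)
      = w m ^ 2 * (b - ‖m‖ ^ 2) ^ (θ - 1) + m i * D (EuclideanSpace.single i 1) := by
    intro i
    simp [EuclideanSpace.single_apply]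
  simp only [happ]
  rw [Finset.sum_add_distrib]
  have h1 : ∑ _i : Fin N, w m ^ 2 * (b - ‖m‖ ^ 2) ^ (θ - 1)
      = (N : ℝ) * (w m ^ 2 * (b - ‖m‖ ^ 2) ^ (θ - 1)) := by
    simp [Finset.sum_const, nsmul_eq_mul]
  have h2 : ∑ i, m i * D (EuclideanSpace.single i 1) = D m := by
    have hstep : ∀ i : Fin N, m i * D (EuclideanSpace.single i 1)
        = D (m i • EuclideanSpace.single i 1) := by
      intro i; rw [D.map_smul]; simp
    simp only [hstep]
    rw [← map_sum, sum_coord_single]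
  rw [h1, h2]
  have hDm : D m = w m ^ 2 * ((θ - 1) * (b - ‖m‖ ^ 2) ^ (θ - 2) * (-2)) * ‖m‖ ^ 2
      + (b - ‖m‖ ^ 2) ^ (θ - 1) * (2 * w m) * (fderiv ℝ w m m) := by
    rw [hD]
    rw [ContinuousLinearMap.add_apply, ContinuousLinearMap.smul_apply,
      ContinuousLinearMap.smul_apply, innerSL_apply_apply, real_inner_self_eq_norm_sq]
    simp [mul_assoc]
  have hw2m : fderiv ℝ (fun x => w x ^ 2) m m = 2 * w m * (fderiv ℝ w m m) := by
    rw [(hw2deriv hw m).fderiv]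
    simp [mul_assoc]
  rw [hDm, hw2m]
  ring

private lemma mem_ball_iff_pos {N : ℕ} {b : ℝ} (hb0 : 0 < b) (m : EuclideanSpace ℝ (Fin N)) :
    m ∈ Metric.ball (0 : EuclideanSpace ℝ (Fin N)) (Real.sqrt b) ↔ 0 < b - ‖m‖ ^ 2 := by
  rw [mem_ball_zero_iff]
  constructor
  · intro h
    have h2 := Real.sq_sqrt hb0.le
    nlinarith [norm_nonneg m, Real.sqrt_nonneg b]
  · intro h
    exact (Real.lt_sqrt (norm_nonneg m)).2 (by linarith)

private lemma ev_zero_of_nmem {N : ℕ} {w : EuclideanSpace ℝ (Fin N) → ℝ}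
    {m : EuclideanSpace ℝ (Fin N)} (hm : m ∉ tsupport w) :
    ∀ᶠ y in nhds m, w y = 0 :=
  Filter.eventually_of_mem ((isClosed_tsupport w).isOpen_compl.mem_nhds hm)
    (fun _ hy => image_eq_zero_of_notMem_tsupport hy)

private lemma fderiv_eq_zero_of_ev {N : ℕ} {f : EuclideanSpace ℝ (Fin N) → ℝ}
    {m : EuclideanSpace ℝ (Fin N)} (h : ∀ᶠ y in nhds m, f y = 0) : fderiv ℝ f m = 0 := by
  have h' : f =ᶠ[nhds m] fun _ => (0 : ℝ) := h
  rw [h'.fderiv_eq]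
  exact fderiv_const_apply 0

private lemma contdiff_gi {N : ℕ} {b θ : ℝ} {w : EuclideanSpace ℝ (Fin N) → ℝ}
    (hb0 : 0 < b) (hw : ContDiff ℝ (⊤ : ℕ∞) w)
    (hsuppB : tsupport w ⊆ Metric.ball (0 : EuclideanSpace ℝ (Fin N)) (Real.sqrt b))
    (i : Fin N) :
    ContDiff ℝ (⊤ : ℕ∞) (fun x : EuclideanSpace ℝ (Fin N) =>
      w x ^ 2 * (b - ‖x‖ ^ 2) ^ (θ - 1) * x i) := by
  rw [contDiff_iff_contDiffAt]
  intro m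
  by_cases hm : m ∈ tsupport w
  · have hpos : 0 < b - ‖m‖ ^ 2 := (mem_ball_iff_pos hb0 m).1 (hsuppB hm)
    have c1 : ContDiffAt ℝ (⊤ : ℕ∞) (fun x : EuclideanSpace ℝ (Fin N) => w x ^ 2) m :=
      (hw.pow 2).contDiffAt
    have c2 : ContDiffAt ℝ (⊤ : ℕ∞) (fun x : EuclideanSpace ℝ (Fin N) => (b - ‖x‖ ^ 2) ^ (θ - 1)) m := by
      have hq : ContDiffAt ℝ (⊤ : ℕ∞) (fun x : EuclideanSpace ℝ (Fin N) => b - ‖x‖ ^ 2) m :=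
        (contDiff_const.sub (contDiff_norm_sq ℝ)).contDiffAt
      exact hq.rpow_const_of_ne (ne_of_gt hpos)
    have c3 : ContDiffAt ℝ (⊤ : ℕ∞) (fun x : EuclideanSpace ℝ (Fin N) => x i) m :=
      (EuclideanSpace.proj (𝕜 := ℝ) i).contDiff.contDiffAt
    exact (c1.mul c2).mul c3
  · have hev : (fun x : EuclideanSpace ℝ (Fin N) => w x ^ 2 * (b - ‖x‖ ^ 2) ^ (θ - 1) * x i)
        =ᶠ[nhds m] fun _ => (0 : ℝ) := by
      filter_upwards [ev_zero_of_nmem hm] with y hy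
      simp [hy]
    exact (contDiffAt_const (c := (0 : ℝ))).congr_of_eventuallyEq hev

private lemma fderiv_sq_zero_of_nmem {N : ℕ} {w : EuclideanSpace ℝ (Fin N) → ℝ}
    {m : EuclideanSpace ℝ (Fin N)} (hm : m ∉ tsupport w) :
    fderiv ℝ (fun x => w x ^ 2) m = 0 :=
  fderiv_eq_zero_of_ev (by filter_upwards [ev_zero_of_nmem hm] with z hz; simp [hz])

private lemma contP {N : ℕ} {b θ : ℝ} {w : EuclideanSpace ℝ (Fin N) → ℝ}
    (hb0 : 0 < b) (hw : ContDiff ℝ (⊤ : ℕ∞) w)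
    (hsuppB : tsupport w ⊆ Metric.ball (0 : EuclideanSpace ℝ (Fin N)) (Real.sqrt b)) :
    Continuous (fun m : EuclideanSpace ℝ (Fin N) =>
      fderiv ℝ (fun x => w x ^ 2) m m * (b - ‖m‖ ^ 2) ^ (θ - 1)) := by
  rw [continuous_iff_continuousAt]
  intro m
  by_cases hm : 0 < b - ‖m‖ ^ 2
  · apply ContinuousAt.mul
    · have hc : Continuous (fun m => fderiv ℝ (fun x => w x ^ 2) m) :=
        (hw.pow 2).continuous_fderiv (by simp)
      exact (hc.clm_apply continuous_id).continuousAt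
    · exact ((continuous_const.sub (continuous_norm.pow 2)).continuousAt).rpow_const
        (Or.inl (ne_of_gt hm))
  · have hms : m ∉ tsupport w := fun hc => hm ((mem_ball_iff_pos hb0 m).1 (hsuppB hc))
    have hev : (fun m : EuclideanSpace ℝ (Fin N) =>
        fderiv ℝ (fun x => w x ^ 2) m m * (b - ‖m‖ ^ 2) ^ (θ - 1)) =ᶠ[nhds m]
        fun _ => (0 : ℝ) := by
      filter_upwards [Filter.eventually_of_mem
        ((isClosed_tsupport w).isOpen_compl.mem_nhds hms) (fun y hy => hy)] with y hy
      simp [fderiv_sq_zero_of_nmem hy]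
    exact continuousAt_const.congr hev.symm

private lemma contQ {N : ℕ} {b θ : ℝ} {w : EuclideanSpace ℝ (Fin N) → ℝ}
    (hb0 : 0 < b) (hw : ContDiff ℝ (⊤ : ℕ∞) w)
    (hsuppB : tsupport w ⊆ Metric.ball (0 : EuclideanSpace ℝ (Fin N)) (Real.sqrt b)) :
    Continuous (fun m : EuclideanSpace ℝ (Fin N) =>
      w m ^ 2 * ((N : ℝ) * (b - ‖m‖ ^ 2) ^ (θ - 1)
        + 2 * (1 - θ) * ‖m‖ ^ 2 * (b - ‖m‖ ^ 2) ^ (θ - 2))) := by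
  rw [continuous_iff_continuousAt]
  intro m
  by_cases hm : 0 < b - ‖m‖ ^ 2
  · have hρ : ContinuousAt (fun m : EuclideanSpace ℝ (Fin N) => b - ‖m‖ ^ 2) m :=
      (continuous_const.sub (continuous_norm.pow 2)).continuousAt
    exact ((hw.continuous.pow 2).continuousAt).mul
      (((continuousAt_const.mul (hρ.rpow_const (Or.inl (ne_of_gt hm)))).add
        (((continuousAt_const.mul (continuous_norm.pow 2).continuousAt)).mul
          (hρ.rpow_const (Or.inl (ne_of_gt hm))))))
  · have hms : m ∉ tsupport w := fun hc => hm ((mem_ball_iff_pos hb0 m).1 (hsuppB hc))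
    have hev : (fun m : EuclideanSpace ℝ (Fin N) =>
        w m ^ 2 * ((N : ℝ) * (b - ‖m‖ ^ 2) ^ (θ - 1)
          + 2 * (1 - θ) * ‖m‖ ^ 2 * (b - ‖m‖ ^ 2) ^ (θ - 2))) =ᶠ[nhds m]
        fun _ => (0 : ℝ) := by
      filter_upwards [ev_zero_of_nmem hms] with y hy
      simp [hy]
    exact continuousAt_const.congr hev.symm


/-- Sign lemma for the `b ≥ 6` coercivity estimate: for `-1 < θ < 1` and
`w ∈ C_c^∞(B)`, the identity
`∫_B ⟨m, ∇(w²)⟩ ρ^{θ-1} = -∫_B w² (N ρ^{θ-1} + 2(1-θ)|m|² ρ^{θ-2}) ≤ 0`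
holds, and consequently `(2 - b/2 - θ) ∫_B ⟨m, ∇w⟩ w ρ^{θ-1} ≥ 0`. -/
theorem sign_lemma (N : ℕ) (hN : 2 ≤ N) (b : ℝ) (hb : 6 ≤ b)
    (θ : ℝ) (hθ₁ : -1 < θ) (hθ₂ : θ < 1)
    (B : Set (EuclideanSpace ℝ (Fin N)))
    (hB : B = Metric.ball (0 : EuclideanSpace ℝ (Fin N)) (Real.sqrt b))
    (ρ : EuclideanSpace ℝ (Fin N) → ℝ) (hρ : ∀ m, ρ m = b - ‖m‖ ^ 2)
    (w : EuclideanSpace ℝ (Fin N) → ℝ) (hw : ContDiff ℝ (⊤ : ℕ∞) w)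
    (hsupp : HasCompactSupport w) (hsuppB : tsupport w ⊆ B) :
    (∫ m in B, ⟪m, gradient (fun x => (w x) ^ 2) m⟫ * ρ m ^ (θ - 1)
      = - ∫ m in B, (w m) ^ 2 * (N * ρ m ^ (θ - 1) + 2 * (1 - θ) * ‖m‖ ^ 2 * ρ m ^ (θ - 2))) ∧
    (∫ m in B, ⟪m, gradient (fun x => (w x) ^ 2) m⟫ * ρ m ^ (θ - 1) ≤ 0) ∧
    (0 ≤ (2 - b / 2 - θ) * ∫ m in B, ⟪m, gradient w m⟫ * w m * ρ m ^ (θ - 1)) := by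
  have hb0 : (0 : ℝ) < b := by linarith
  have hρ' : ρ = fun m => b - ‖m‖ ^ 2 := funext hρ
  subst hρ'
  subst hB
  have hgrad : ∀ (f : EuclideanSpace ℝ (Fin N) → ℝ) (m : EuclideanSpace ℝ (Fin N)),
      ⟪m, gradient f m⟫ = fderiv ℝ f m m := by
    intro f m
    rw [real_inner_comm]
    unfold gradient
    exact InnerProductSpace.toDual_symm_apply
  simp only [hgrad]
  have hnotsupp : ∀ m : EuclideanSpace ℝ (Fin N),
      m ∉ Metric.ball (0 : EuclideanSpace ℝ (Fin N)) (Real.sqrt b) → m ∉ tsupport w :=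
    fun m hm hc => hm (hsuppB hc)
  -- integrability of the two integrands
  have hPint : Integrable (fun m : EuclideanSpace ℝ (Fin N) =>
      fderiv ℝ (fun x => w x ^ 2) m m * (b - ‖m‖ ^ 2) ^ (θ - 1)) :=
    (contP hb0 hw hsuppB).integrable_of_hasCompactSupport
      (HasCompactSupport.intro hsupp (fun x hx => by simp [fderiv_sq_zero_of_nmem hx]))
  have hQint : Integrable (fun m : EuclideanSpace ℝ (Fin N) =>
      w m ^ 2 * ((N : ℝ) * (b - ‖m‖ ^ 2) ^ (θ - 1)
        + 2 * (1 - θ) * ‖m‖ ^ 2 * (b - ‖m‖ ^ 2) ^ (θ - 2))) :=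
    (contQ hb0 hw hsuppB).integrable_of_hasCompactSupport
      (HasCompactSupport.intro hsupp
        (fun x hx => by simp [image_eq_zero_of_notMem_tsupport hx]))
  -- divergence terms integrate to zero
  have hgics : ∀ i : Fin N, HasCompactSupport (fun x : EuclideanSpace ℝ (Fin N) =>
      w x ^ 2 * (b - ‖x‖ ^ 2) ^ (θ - 1) * x i) :=
    fun i => HasCompactSupport.intro hsupp
      (fun x hx => by simp [image_eq_zero_of_notMem_tsupport hx])
  have hFi : ∀ i : Fin N, ∫ m, fderiv ℝ
      (fun x => w x ^ 2 * (b - ‖x‖ ^ 2) ^ (θ - 1) * x i) m (EuclideanSpace.single i 1) = 0 :=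
    fun i => integral_fderiv_apply_eq_zero (contdiff_gi hb0 hw hsuppB i) (hgics i) _
  have hgifz : ∀ (i : Fin N) (x : EuclideanSpace ℝ (Fin N)), x ∉ tsupport w →
      fderiv ℝ (fun x => w x ^ 2 * (b - ‖x‖ ^ 2) ^ (θ - 1) * x i) x = 0 := by
    intro i x hx
    exact fderiv_eq_zero_of_ev (by filter_upwards [ev_zero_of_nmem hx] with z hz; simp [hz])
  have hFiint : ∀ i : Fin N, Integrable (fun m : EuclideanSpace ℝ (Fin N) =>
      fderiv ℝ (fun x => w x ^ 2 * (b - ‖x‖ ^ 2) ^ (θ - 1) * x i) m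
        (EuclideanSpace.single i 1)) :=
    fun i => ((((contdiff_gi hb0 hw hsuppB i).continuous_fderiv (by simp)).clm_apply
        continuous_const).integrable_of_hasCompactSupport
      (HasCompactSupport.intro hsupp (fun x hx => by simp [hgifz i x hx])))
  -- pointwise divergence identity
  have hpt : ∀ m : EuclideanSpace ℝ (Fin N),
      fderiv ℝ (fun x => w x ^ 2) m m * (b - ‖m‖ ^ 2) ^ (θ - 1)
        + w m ^ 2 * ((N : ℝ) * (b - ‖m‖ ^ 2) ^ (θ - 1)
          + 2 * (1 - θ) * ‖m‖ ^ 2 * (b - ‖m‖ ^ 2) ^ (θ - 2))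
      = ∑ i, fderiv ℝ (fun x => w x ^ 2 * (b - ‖x‖ ^ 2) ^ (θ - 1) * x i) m
          (EuclideanSpace.single i 1) := by
    intro m
    by_cases hm : 0 < b - ‖m‖ ^ 2
    · exact (div_sum_eq hw b θ m hm).symm
    · have hms : m ∉ tsupport w := fun hc => hm ((mem_ball_iff_pos hb0 m).1 (hsuppB hc))
      have h1 : fderiv ℝ (fun x => w x ^ 2) m = 0 := fderiv_sq_zero_of_nmem hms
      have h2 : w m = 0 := image_eq_zero_of_notMem_tsupport hms
      simp [h1, h2, fun i => hgifz i m hms]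
  -- total integral of P + Q vanishes
  have hsum0 : ∫ m : EuclideanSpace ℝ (Fin N),
      (fderiv ℝ (fun x => w x ^ 2) m m * (b - ‖m‖ ^ 2) ^ (θ - 1)
        + w m ^ 2 * ((N : ℝ) * (b - ‖m‖ ^ 2) ^ (θ - 1)
          + 2 * (1 - θ) * ‖m‖ ^ 2 * (b - ‖m‖ ^ 2) ^ (θ - 2))) = 0 := by
    rw [show (fun m : EuclideanSpace ℝ (Fin N) =>
        fderiv ℝ (fun x => w x ^ 2) m m * (b - ‖m‖ ^ 2) ^ (θ - 1)
          + w m ^ 2 * ((N : ℝ) * (b - ‖m‖ ^ 2) ^ (θ - 1)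
            + 2 * (1 - θ) * ‖m‖ ^ 2 * (b - ‖m‖ ^ 2) ^ (θ - 2)))
      = fun m => ∑ i, fderiv ℝ (fun x => w x ^ 2 * (b - ‖x‖ ^ 2) ^ (θ - 1) * x i) m
          (EuclideanSpace.single i 1) from funext hpt]
    rw [integral_finset_sum _ (fun i _ => hFiint i)]
    simp [hFi]
  have hadd := integral_add hPint hQint
  rw [hsum0] at hadd
  -- set integrals over B agree with full space integrals
  have hPB : ∫ m in Metric.ball (0 : EuclideanSpace ℝ (Fin N)) (Real.sqrt b),
      fderiv ℝ (fun x => w x ^ 2) m m * (b - ‖m‖ ^ 2) ^ (θ - 1)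
      = ∫ m : EuclideanSpace ℝ (Fin N),
        fderiv ℝ (fun x => w x ^ 2) m m * (b - ‖m‖ ^ 2) ^ (θ - 1) :=
    setIntegral_eq_integral_of_forall_compl_eq_zero
      (fun m hm => by simp [fderiv_sq_zero_of_nmem (hnotsupp m hm)])
  have hQB : ∫ m in Metric.ball (0 : EuclideanSpace ℝ (Fin N)) (Real.sqrt b),
      w m ^ 2 * ((N : ℝ) * (b - ‖m‖ ^ 2) ^ (θ - 1)
        + 2 * (1 - θ) * ‖m‖ ^ 2 * (b - ‖m‖ ^ 2) ^ (θ - 2))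
      = ∫ m : EuclideanSpace ℝ (Fin N),
        w m ^ 2 * ((N : ℝ) * (b - ‖m‖ ^ 2) ^ (θ - 1)
          + 2 * (1 - θ) * ‖m‖ ^ 2 * (b - ‖m‖ ^ 2) ^ (θ - 2)) :=
    setIntegral_eq_integral_of_forall_compl_eq_zero
      (fun m hm => by simp [image_eq_zero_of_notMem_tsupport (hnotsupp m hm)])
  have hkey : ∫ m in Metric.ball (0 : EuclideanSpace ℝ (Fin N)) (Real.sqrt b),
      fderiv ℝ (fun x => w x ^ 2) m m * (b - ‖m‖ ^ 2) ^ (θ - 1)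
      = - ∫ m in Metric.ball (0 : EuclideanSpace ℝ (Fin N)) (Real.sqrt b),
        w m ^ 2 * ((N : ℝ) * (b - ‖m‖ ^ 2) ^ (θ - 1)
          + 2 * (1 - θ) * ‖m‖ ^ 2 * (b - ‖m‖ ^ 2) ^ (θ - 2)) := by
    rw [hPB, hQB]; linarith
  -- nonnegativity of Q on the ball
  have hQnonneg : 0 ≤ ∫ m in Metric.ball (0 : EuclideanSpace ℝ (Fin N)) (Real.sqrt b),
      w m ^ 2 * ((N : ℝ) * (b - ‖m‖ ^ 2) ^ (θ - 1)
        + 2 * (1 - θ) * ‖m‖ ^ 2 * (b - ‖m‖ ^ 2) ^ (θ - 2)) := by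
    refine setIntegral_nonneg measurableSet_ball (fun m hm => ?_)
    have hpos : 0 < b - ‖m‖ ^ 2 := (mem_ball_iff_pos hb0 m).1 hm
    have h1 : (0 : ℝ) ≤ (b - ‖m‖ ^ 2) ^ (θ - 1) := Real.rpow_nonneg hpos.le _
    have h2 : (0 : ℝ) ≤ (b - ‖m‖ ^ 2) ^ (θ - 2) := Real.rpow_nonneg hpos.le _
    have h3 : (0 : ℝ) ≤ 2 * (1 - θ) := by linarith
    have h4 : (0 : ℝ) ≤ ‖m‖ ^ 2 := sq_nonneg _
    refine mul_nonneg (sq_nonneg _) (add_nonneg (mul_nonneg (Nat.cast_nonneg N) h1)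
      (mul_nonneg (mul_nonneg h3 h4) h2))
  have hle : ∫ m in Metric.ball (0 : EuclideanSpace ℝ (Fin N)) (Real.sqrt b),
      fderiv ℝ (fun x => w x ^ 2) m m * (b - ‖m‖ ^ 2) ^ (θ - 1) ≤ 0 := by
    rw [hkey]; linarith
  refine ⟨hkey, hle, ?_⟩
  -- third part
  have hptw3 : ∀ m : EuclideanSpace ℝ (Fin N),
      fderiv ℝ w m m * w m * (b - ‖m‖ ^ 2) ^ (θ - 1)
      = 2⁻¹ * (fderiv ℝ (fun x => w x ^ 2) m m * (b - ‖m‖ ^ 2) ^ (θ - 1)) := by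
    intro m
    have happ : fderiv ℝ (fun x => w x ^ 2) m m = 2 * w m * fderiv ℝ w m m := by
      rw [(hw2deriv hw m).fderiv]; simp [mul_assoc]
    rw [happ]; ring
  simp only [hptw3]
  rw [MeasureTheory.integral_const_mul]
  have hc : 2 - b / 2 - θ ≤ 0 := by linarith
  nlinarith [mul_nonneg (neg_nonneg.2 hc) (neg_nonneg.2 hle)]
end

section
/- Let N ≥ 2 and let G : [0, r₀] → ℝ be defined by G(r)² = (1/2) ∫_{S^{N-1}} φ(rξ)² r^{N−2} dS_ξ for a C¹ function φ, where 1 ≤ r ≤ r₀. Suppose G is differentiable at r with G(r) > 0. Then G'(r)² ≤ ∫_{S^{N-1}} |∇φ(rξ)|² r^{N−2} dS_ξ + ((N−2)²/2) G(r)². -/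
/-!
With `c = N - 2`, `P(s) = ∫ φ(sξ)² dS` and `Q = ∫ φ(rξ) ⟨∇φ(rξ), ξ⟩ dS`, we have
`G² = ½ P(s) s^c` near `r`, and differentiation under the integral sign gives `P' = 2Q`, so
`2 G G' = Q r^c + (c/2) P r^(c-1)`. Cauchy–Schwarz on the sphere gives
`Q² ≤ P ∫ |∇φ(rξ)|² dS`; then `(a + b)² ≤ 2a² + 2b²` and `r^(c-1) ≤ r^c` (as `r ≥ 1`)
bound `(2 G G')²` by `4 G² (r^c ∫ |∇φ(rξ)|² dS + c² G² / 2)`.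
-/

open MeasureTheory Topology

theorem sq_integral_mul_le {α : Type*} [MeasurableSpace α] {μ : Measure α} {f g : α → ℝ}
    (hf : Integrable (fun a => f a ^ 2) μ) (hg : Integrable (fun a => g a ^ 2) μ)
    (hfg : Integrable (fun a => f a * g a) μ) :
    (∫ a, f a * g a ∂μ) ^ 2 ≤ (∫ a, f a ^ 2 ∂μ) * ∫ a, g a ^ 2 ∂μ := by
  have hquad (t : ℝ) : 0 ≤ (∫ a, g a ^ 2 ∂μ) * (t * t) + (-2 * ∫ a, f a * g a ∂μ) * t
      + ∫ a, f a ^ 2 ∂μ := by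
    have hexpand : ∫ a, (t * g a - f a) ^ 2 ∂μ
        = t ^ 2 * ∫ a, g a ^ 2 ∂μ - 2 * t * ∫ a, f a * g a ∂μ + ∫ a, f a ^ 2 ∂μ := by
      have hpt : (fun a => (t * g a - f a) ^ 2)
          = fun a => t ^ 2 * g a ^ 2 - 2 * t * (f a * g a) + f a ^ 2 := by
        ext a; ring
      rw [hpt, integral_add (f := fun a => t ^ 2 * g a ^ 2 - 2 * t * (f a * g a))
          ((hg.const_mul _).sub (hfg.const_mul _)) hf,
        integral_sub (hg.const_mul _) (hfg.const_mul _), integral_const_mul, integral_const_mul]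
    have hnonneg : 0 ≤ ∫ a, (t * g a - f a) ^ 2 ∂μ := integral_nonneg fun a => sq_nonneg _
    nlinarith
  have hdiscrim := discrim_le_zero hquad
  rw [discrim] at hdiscrim
  nlinarith

section CompactDomain

variable {K : Type*} [TopologicalSpace K] [CompactSpace K] [MeasurableSpace K]
  [OpensMeasurableSpace K] (μ : Measure K) [IsFiniteMeasure μ]

theorem hasDerivAt_integral_comp_smul {E : Type*} [NormedAddCommGroup E] [NormedSpace ℝ E]
    {ψ : E → ℝ} (hψ : ContDiff ℝ 1 ψ) {v : K → E} (hv : Continuous v) (r : ℝ) :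
    HasDerivAt (fun s => ∫ ξ, ψ (s • v ξ) ∂μ) (∫ ξ, fderiv ℝ ψ (r • v ξ) (v ξ) ∂μ) r := by
  have hv_snd : Continuous fun p : ℝ × K => v p.2 := hv.comp continuous_snd
  have hF' : Continuous fun p : ℝ × K => fderiv ℝ ψ (p.1 • v p.2) (v p.2) :=
    ((hψ.continuous_fderiv one_ne_zero).comp (continuous_fst.smul hv_snd)).clm_apply hv_snd
  obtain ⟨C, hC⟩ :=
    ((isCompact_closedBall r 1).prod isCompact_univ).exists_bound_of_continuousOn hF'.continuousOn
  have hF (s : ℝ) : Continuous fun ξ => ψ (s • v ξ) := hψ.continuous.comp (hv.const_smul s)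
  refine (hasDerivAt_integral_of_dominated_loc_of_deriv_le (Metric.ball_mem_nhds r one_pos)
    (.of_forall fun s => (hF s).aestronglyMeasurable)
    ((hF r).integrable_of_hasCompactSupport (.of_compactSpace _))
    (hF'.comp (Continuous.prodMk_right r)).aestronglyMeasurable
    (bound := fun _ => C)
    (.of_forall fun ξ s hs => hC (s, ξ) ⟨Metric.ball_subset_closedBall hs, Set.mem_univ ξ⟩)
    (integrable_const C) (.of_forall fun ξ s _ => ?_)).2
  exact ((hψ.differentiable one_ne_zero _).hasFDerivAt.comp_hasDerivAt s
    ((hasDerivAt_id s).smul_const (v ξ))).congr_deriv (by simp)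

theorem sq_integral_mul_le_of_abs_le {f g h : K → ℝ} (hf : Continuous f) (hg : Continuous g)
    (hh : Continuous h) (hgh : ∀ ξ, |g ξ| ≤ h ξ) :
    (∫ ξ, f ξ * g ξ ∂μ) ^ 2 ≤ (∫ ξ, f ξ ^ 2 ∂μ) * ∫ ξ, h ξ ^ 2 ∂μ := by
  have hint {u : K → ℝ} (hu : Continuous u) : Integrable u μ :=
    hu.integrable_of_hasCompactSupport (.of_compactSpace _)
  have hg2 : Integrable (fun ξ => g ξ ^ 2) μ := hint (by fun_prop)
  calc (∫ ξ, f ξ * g ξ ∂μ) ^ 2 ≤ (∫ ξ, f ξ ^ 2 ∂μ) * ∫ ξ, g ξ ^ 2 ∂μ :=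
        sq_integral_mul_le (hint (by fun_prop)) hg2 (hint (by fun_prop))
    _ ≤ (∫ ξ, f ξ ^ 2 ∂μ) * ∫ ξ, h ξ ^ 2 ∂μ := by
        refine mul_le_mul_of_nonneg_left (integral_mono hg2 (hint (by fun_prop)) fun ξ => ?_)
          (by positivity)
        exact sq_le_sq' (abs_le.mp (hgh ξ)).1 (abs_le.mp (hgh ξ)).2

end CompactDomain

theorem abs_fderiv_apply_le_norm_gradient {E : Type*} [NormedAddCommGroup E]
    [InnerProductSpace ℝ E] [CompleteSpace E] (f : E → ℝ) (x y : E) :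
    |fderiv ℝ f x y| ≤ ‖gradient f x‖ * ‖y‖ := by
  rw [← inner_gradient_left]
  exact abs_real_inner_le_norm _ _

theorem deriv_sq_le_of_sq_eq_mul_rpow {G P : ℝ → ℝ} {Q J c r : ℝ} (hr : 1 ≤ r)
    (hG : ∀ᶠ s in 𝓝 r, G s ^ 2 = 1 / 2 * (P s * s ^ c)) (hP : HasDerivAt P (2 * Q) r)
    (hQ : Q ^ 2 ≤ P r * J) (hdiff : DifferentiableAt ℝ G r) (hpos : 0 < G r) :
    deriv G r ^ 2 ≤ J * r ^ c + c ^ 2 / 2 * G r ^ 2 := by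
  have hr_pos : 0 < r := zero_lt_one.trans_le hr
  have hX : 0 < r ^ c := Real.rpow_pos_of_pos hr_pos c
  have hYX : r ^ (c - 1) ≤ r ^ c := Real.rpow_le_rpow_of_exponent_le hr (by linarith)
  have hGr : G r ^ 2 = 1 / 2 * (P r * r ^ c) := hG.self_of_nhds
  have hPr : 0 < P r := by nlinarith
  have hderiv : 2 * G r * deriv G r = Q * r ^ c + c / 2 * P r * r ^ (c - 1) := by
    have hsq : HasDerivAt (fun s => G s ^ 2) (2 * G r * deriv G r) r := by
      simpa using hdiff.hasDerivAt.fun_pow 2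
    refine hsq.unique ((((hP.mul (Real.hasDerivAt_rpow_const (.inl hr_pos.ne'))).const_mul
      (1 / 2 : ℝ)).congr_of_eventuallyEq hG).congr_deriv (by ring))
  have hscaled : (2 * G r) ^ 2 * deriv G r ^ 2 ≤ (2 * G r) ^ 2 * (J * r ^ c + c ^ 2 / 2 * G r ^ 2) :=
    calc (2 * G r) ^ 2 * deriv G r ^ 2 = (Q * r ^ c + c / 2 * P r * r ^ (c - 1)) ^ 2 := by
          rw [← hderiv]; ring
      _ ≤ 2 * ((Q * r ^ c) ^ 2 + (c / 2 * P r * r ^ (c - 1)) ^ 2) := add_sq_le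
      _ ≤ 2 * (P r * J * (r ^ c) ^ 2 + (c / 2 * P r) ^ 2 * (r ^ c) ^ 2) := by
          rw [mul_pow, mul_pow (c / 2 * P r)]
          gcongr
      _ = (2 * G r) ^ 2 * (J * r ^ c + c ^ 2 / 2 * G r ^ 2) := by
          linear_combination (-(4 * J * r ^ c) - 2 * c ^ 2 * (G r ^ 2 + P r * r ^ c / 2)) * hGr
  exact le_of_mul_le_mul_left hscaled (by positivity)

theorem spherical_average_estimate_general (N : ℕ) (r₀ : ℝ)
    (φ : EuclideanSpace ℝ (Fin N) → ℝ) (hφ : ContDiff ℝ 1 φ)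
    (G : ℝ → ℝ)
    (hG : ∀ r ∈ Set.Icc (1 : ℝ) r₀, (G r) ^ 2 =
      (1 / 2) * ∫ ξ : Metric.sphere (0 : EuclideanSpace ℝ (Fin N)) 1,
        (φ (r • (ξ : EuclideanSpace ℝ (Fin N)))) ^ 2 * r ^ ((N : ℝ) - 2)
          ∂((volume : Measure (EuclideanSpace ℝ (Fin N))).toSphere))
    (r : ℝ) (hr : r ∈ Set.Ioo (1 : ℝ) r₀)
    (hdiff : DifferentiableAt ℝ G r) (hpos : 0 < G r) :
    (deriv G r) ^ 2 ≤
      (∫ ξ : Metric.sphere (0 : EuclideanSpace ℝ (Fin N)) 1,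
        ‖gradient φ (r • (ξ : EuclideanSpace ℝ (Fin N)))‖ ^ 2 * r ^ ((N : ℝ) - 2)
          ∂((volume : Measure (EuclideanSpace ℝ (Fin N))).toSphere))
      + ((N : ℝ) - 2) ^ 2 / 2 * (G r) ^ 2 := by
  have hfderiv_sq (x y : EuclideanSpace ℝ (Fin N)) :
      fderiv ℝ (fun x => φ x ^ 2) x y = 2 * (φ x * fderiv ℝ φ x y) := by
    rw [((hφ.differentiable one_ne_zero x).hasFDerivAt.pow 2).fderiv]
    simp only [smul_apply, smul_eq_mul]
    ring
  have hP := hasDerivAt_integral_comp_smul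
    (volume : Measure (EuclideanSpace ℝ (Fin N))).toSphere (hφ.pow 2) continuous_subtype_val r
  simp only [hfderiv_sq, integral_const_mul] at hP
  have hgradient : Continuous (gradient φ) :=
    (InnerProductSpace.toDual ℝ _).symm.continuous.comp (hφ.continuous_fderiv one_ne_zero)
  have hsmul : Continuous fun ξ : Metric.sphere (0 : EuclideanSpace ℝ (Fin N)) 1 =>
      r • (ξ : EuclideanSpace ℝ (Fin N)) := continuous_subtype_val.const_smul r
  have hCS := sq_integral_mul_le_of_abs_le (volume : Measure (EuclideanSpace ℝ (Fin N))).toSphere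
    (hφ.continuous.comp hsmul)
    (((hφ.continuous_fderiv one_ne_zero).comp hsmul).clm_apply continuous_subtype_val)
    (hgradient.comp hsmul).norm fun ξ => by
      simpa [norm_eq_of_mem_sphere ξ] using abs_fderiv_apply_le_norm_gradient φ (r • ξ) ξ
  rw [integral_mul_const]
  refine deriv_sq_le_of_sq_eq_mul_rpow hr.1.le ?_ hP hCS hdiff hpos
  filter_upwards [Ioo_mem_nhds hr.1 hr.2] with s hs
  rw [hG s (Set.Ioo_subset_Icc_self hs), integral_mul_const]

/-- Spherical-average estimate used in the critical case `b = 2`: if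
`G(r)² = (1/2) ∫_{S^{N-1}} φ(rξ)² r^{N-2} dS_ξ` for `1 ≤ r ≤ r₀`, `φ` is `C¹`, and `G` is
differentiable at `r` with `G(r) > 0`, then
`G'(r)² ≤ ∫_{S^{N-1}} |∇φ(rξ)|² r^{N-2} dS_ξ + ((N-2)²/2) G(r)²`. -/
theorem spherical_average_estimate (N : ℕ) (hN : 2 ≤ N) (r₀ : ℝ) (hr₀ : 1 ≤ r₀)
    (φ : EuclideanSpace ℝ (Fin N) → ℝ) (hφ : ContDiff ℝ 1 φ)
    (G : ℝ → ℝ)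
    (hG : ∀ r ∈ Set.Icc (1 : ℝ) r₀, (G r) ^ 2 =
      (1 / 2) * ∫ ξ : Metric.sphere (0 : EuclideanSpace ℝ (Fin N)) 1,
        (φ (r • (ξ : EuclideanSpace ℝ (Fin N)))) ^ 2 * r ^ ((N : ℝ) - 2)
          ∂((volume : Measure (EuclideanSpace ℝ (Fin N))).toSphere))
    (r : ℝ) (hr : r ∈ Set.Ioo (1 : ℝ) r₀)
    (hdiff : DifferentiableAt ℝ G r) (hpos : 0 < G r) :
    (deriv G r) ^ 2 ≤
      (∫ ξ : Metric.sphere (0 : EuclideanSpace ℝ (Fin N)) 1,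
        ‖gradient φ (r • (ξ : EuclideanSpace ℝ (Fin N)))‖ ^ 2 * r ^ ((N : ℝ) - 2)
          ∂((volume : Measure (EuclideanSpace ℝ (Fin N))).toSphere))
      + ((N : ℝ) - 2) ^ 2 / 2 * (G r) ^ 2 :=
  spherical_average_estimate_general N r₀ φ hφ G hG r hr hdiff hpos
end
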